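/- arXiv:2111.13140 — 2 statements merged into one kernel-verified Lean document; each statement's English description precedes it below -/
import Mathlib

section
/- Let d ≥ 1, let (ξ_n)_{n≥1} be ℝ^d-valued random variables, and let (a_n)_{n≥1} be positive reals with a_n → ∞. Suppose that ξ_n / a_n converges in distribution to an ℝ^d-valued random vector Z whose law is absolutely continuous with respect to Lebesgue measure. Then for every L > 0, lim_{n→∞} sup_{x ∈ ℝ^d} P(ξ_n ∈ x + [−L/2, L/2]^d) = 0. -/
/-!
Let `μₙ` be the law of `ξₙ / aₙ` and `μ` the law of `Z`. In the sup norm the event in question is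
`ξₙ / aₙ ∈ closedBall (x / aₙ) (L / (2 aₙ))`, a ball whose radius tends to `0`. Convergence in
distribution on a separable space is convergence in the Lévy–Prokhorov metric, so for `n` large
`μₙ (closedBall y r) ≤ μ (closedBall y (r + c)) + c` with `c` small. Since `μ` has an integrable
density, absolute continuity of the integral makes `μ (closedBall y δ)` small uniformly in `y`
once `δ` is small.
-/

open MeasureTheory Filter Topology Metric
open scoped ENNReal NNReal Pointwise

theorem Metric.thickening_closedBall_subset_closedBall {X : Type*} [PseudoMetricSpace X]
    (x : X) (δ r : ℝ) : thickening δ (closedBall x r) ⊆ closedBall x (r + δ) := by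
  intro y hy
  obtain ⟨z, hz, hyz⟩ := mem_thickening_iff.mp hy
  calc dist y x ≤ dist y z + dist z x := dist_triangle y z x
    _ ≤ r + δ := by linarith [mem_closedBall.mp hz]

section

variable {X : Type*} [PseudoMetricSpace X] [TopologicalSpace.SeparableSpace X]
  [MeasurableSpace X] [BorelSpace X]

theorem MeasureTheory.ProbabilityMeasure.tendsto_iSup_measure_closedBall_of_tendsto {ι : Type*}
    {l : Filter ι} {μs : ι → ProbabilityMeasure X} {μ : ProbabilityMeasure X}
    (hμ : Tendsto μs l (𝓝 μ)) {r : ι → ℝ} (hr : Tendsto r l (𝓝 0))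
    (hμ_balls : ∀ ε > 0, ∃ δ > 0, ∀ x, (μ : Measure X) (closedBall x δ) ≤ ε) :
    Tendsto (fun i => ⨆ x, (μs i : Measure X) (closedBall x (r i))) l (𝓝 0) := by
  have hLP : Tendsto (fun i => levyProkhorovEDist (μs i : Measure X) μ) l (𝓝 0) :=
    tendsto_iff_edist_tendsto_0.mp
      ((LevyProkhorov.continuous_ofMeasure_probabilityMeasure.tendsto μ).comp hμ)
  rw [ENNReal.tendsto_nhds_zero]
  intro ε hε
  obtain ⟨δ, hδ, hμδ⟩ := hμ_balls (ε / 2) (ENNReal.half_pos hε.ne')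
  set c : ℝ≥0∞ := min (ε / 2) (ENNReal.ofReal (δ / 2))
  have hc : 0 < c := lt_min (ENNReal.half_pos hε.ne') (ENNReal.ofReal_pos.mpr (half_pos hδ))
  have hc_le : c.toReal ≤ δ / 2 :=
    ENNReal.toReal_le_of_le_ofReal (half_pos hδ).le (min_le_right _ _)
  filter_upwards [hLP.eventually (gt_mem_nhds hc), hr.eventually (gt_mem_nhds (half_pos hδ))]
    with i hi hri
  refine iSup_le fun x => ?_
  calc (μs i : Measure X) (closedBall x (r i))
      ≤ (μ : Measure X) (thickening c.toReal (closedBall x (r i))) + c :=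
        left_measure_le_of_levyProkhorovEDist_lt hi measurableSet_closedBall
    _ ≤ (μ : Measure X) (closedBall x δ) + ε / 2 := by
        gcongr
        · exact (thickening_closedBall_subset_closedBall x _ _).trans
            (closedBall_subset_closedBall (by linarith))
        · exact min_le_left _ _
    _ ≤ ε / 2 + ε / 2 := by gcongr; exact hμδ x
    _ = ε := ENNReal.add_halves ε

end

theorem MeasureTheory.Measure.AbsolutelyContinuous.exists_forall_measure_closedBall_le
    {E : Type*} [NormedAddCommGroup E] [NormedSpace ℝ E] [FiniteDimensional ℝ E] [Nontrivial E]
    [MeasurableSpace E] [BorelSpace E] {μ ν : Measure E} [ν.IsAddHaarMeasure] [IsFiniteMeasure μ]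
    (hμν : μ ≪ ν) {ε : ℝ≥0∞} (hε : 0 < ε) : ∃ δ > 0, ∀ x, μ (closedBall x δ) ≤ ε := by
  have hfin : ∫⁻ x, μ.rnDeriv ν x ∂ν ≠ ∞ :=
    (Measure.lintegral_rnDeriv_le.trans_lt (measure_lt_top μ _)).ne
  obtain ⟨η, hη, hμη⟩ := exists_pos_setLIntegral_lt_of_measure_lt hfin hε.ne'
  have hballs : Tendsto (fun δ : ℝ => ENNReal.ofReal (δ ^ Module.finrank ℝ E) * ν (ball 0 1))
      (𝓝 0) (𝓝 0) := by
    have hk : Module.finrank ℝ E ≠ 0 := Module.finrank_pos.ne'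
    simpa [hk] using ENNReal.Tendsto.mul_const
      ((ENNReal.continuous_ofReal.comp (continuous_pow (Module.finrank ℝ E))).tendsto 0)
      (Or.inr (measure_ball_lt_top (μ := ν) (x := 0) (r := 1)).ne)
  obtain ⟨δ, hδν, hδ⟩ := (((hballs.mono_left nhdsWithin_le_nhds).eventually
    (gt_mem_nhds hη)).and (self_mem_nhdsWithin (s := Set.Ioi 0))).exists
  refine ⟨δ, hδ, fun x => ?_⟩
  rw [← Measure.withDensity_rnDeriv_eq μ ν hμν, withDensity_apply _ measurableSet_closedBall]
  refine (hμη _ ?_).le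
  rwa [Measure.addHaar_closedBall ν x (le_of_lt hδ)]

theorem Pi.inv_smul_mem_closedBall_iff_forall_abs_sub_le {ι : Type*} [Fintype ι] {a r : ℝ}
    (ha : 0 < a) (hr : 0 ≤ r) (v x : ι → ℝ) :
    a⁻¹ • v ∈ closedBall (a⁻¹ • x) (a⁻¹ * r) ↔ ∀ i, |v i - x i| ≤ r := by
  have hball : a⁻¹ • closedBall x r = closedBall (a⁻¹ • x) (a⁻¹ * r) := by
    rw [smul_closedBall _ _ hr, Real.norm_of_nonneg (inv_nonneg.mpr ha.le)]
  rw [← hball, Set.smul_mem_smul_set_iff₀ (inv_ne_zero ha.ne'),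
    mem_closedBall, dist_pi_le_iff hr]
  simp only [Real.dist_eq]

/-- If `ξ_n / a_n` converges in distribution (with `a_n → ∞`) to a random
vector `Z` whose law is absolutely continuous with respect to Lebesgue measure, then
`sup_x P(ξ_n ∈ x + [-L/2, L/2]^d) → 0` for every `L > 0`. -/
theorem diffuseness_of_node_locations
    {d : ℕ} (hd : 1 ≤ d)
    {Ω : Type*} [MeasurableSpace Ω] (P : Measure Ω) [IsProbabilityMeasure P]
    {Ω' : Type*} [MeasurableSpace Ω'] (P' : Measure Ω') [IsProbabilityMeasure P']
    (ξ : ℕ → Ω → (Fin d → ℝ)) (hξ : ∀ n, Measurable (ξ n))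
    (a : ℕ → ℝ) (ha : ∀ n, 0 < a n) (ha' : Tendsto a atTop atTop)
    (Z : Ω' → (Fin d → ℝ)) (hZ : Measurable Z)
    (habs : Measure.map Z P' ≪ volume)
    (hconv : ∀ f : BoundedContinuousFunction (Fin d → ℝ) ℝ,
      Tendsto (fun n => ∫ ω, f ((a n)⁻¹ • ξ n ω) ∂P) atTop (𝓝 (∫ ω', f (Z ω') ∂P'))) :
    ∀ L : ℝ, 0 < L →
      Tendsto (fun n => ⨆ x : Fin d → ℝ, P {ω | ∀ i, |ξ n ω i - x i| ≤ L / 2})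
        atTop (𝓝 0) := by
  intro L hL
  have hξa : ∀ n, Measurable fun ω => (a n)⁻¹ • ξ n ω := fun n =>
    (measurable_const_smul (a n)⁻¹).comp (hξ n)
  let μs : ℕ → ProbabilityMeasure (Fin d → ℝ) := fun n =>
    ⟨P.map fun ω => (a n)⁻¹ • ξ n ω, Measure.isProbabilityMeasure_map (hξa n).aemeasurable⟩
  let μZ : ProbabilityMeasure (Fin d → ℝ) :=
    ⟨P'.map Z, Measure.isProbabilityMeasure_map hZ.aemeasurable⟩
  have hμs : Tendsto μs atTop (𝓝 μZ) := by
    refine ProbabilityMeasure.tendsto_iff_forall_integral_tendsto.mpr fun f => ?_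
    simp only [μs, μZ, ProbabilityMeasure.coe_mk, integral_map (hξa _).aemeasurable
      f.continuous.aestronglyMeasurable, integral_map hZ.aemeasurable
      f.continuous.aestronglyMeasurable]
    exact hconv f
  have hr : Tendsto (fun n => (a n)⁻¹ * (L / 2)) atTop (𝓝 0) := by
    simpa using ha'.inv_tendsto_atTop.mul_const (L / 2)
  -- makes `Fin d → ℝ` nontrivial; for `d = 0` every probability measure is a point mass
  have : Nonempty (Fin d) := ⟨⟨0, hd⟩⟩
  refine tendsto_of_tendsto_of_tendsto_of_le_of_le tendsto_const_nhds
    (ProbabilityMeasure.tendsto_iSup_measure_closedBall_of_tendsto hμs hr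
      fun ε hε => habs.exists_forall_measure_closedBall_le hε)
    (fun n => zero_le) fun n => iSup_le fun x => le_iSup_of_le ((a n)⁻¹ • x) (le_of_eq ?_)
  rw [ProbabilityMeasure.coe_mk, Measure.map_apply (hξa n) measurableSet_closedBall]
  congr 1
  ext ω
  exact (Pi.inv_smul_mem_closedBall_iff_forall_abs_sub_le (ha n) (by positivity) _ _).symm
end

section
/- Let S ⊆ ℝ, t ∈ ℝ, δ > 0 and M > 0. Then: (i) I_{δ,M}(t,S) ≤ I(t,S); and (ii) if a ≤ t ≤ b are real numbers with [a,b] ⊆ S, then I_{δ,M}(t,S) ≥ min(b − a, M) − 2δ. In particular, if t ∈ S then I_{δ,M}(t,S) ≥ min(I(t,S), M) − 2δ. -/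
open MeasureTheory Filter Topology
open scoped ENNReal NNReal

/-- The connection-interval length `I(t,S)`: the supremum of `b - a` over all intervals
`[a,b] ⊆ S` with `a ≤ b` and `t ∈ [a,b]` (and `0` if `t ∉ S`, since then no such interval
exists). -/
noncomputable def connInterval (t : ℝ) (S : Set ℝ) : ℝ≥0∞ :=
  ⨆ (a : ℝ) (b : ℝ) (_ : a ≤ b) (_ : t ∈ Set.Icc a b) (_ : Set.Icc a b ⊆ S),
    ENNReal.ofReal (b - a)

/-- The discretized interval length `I_{δ,M}(t,S)`: the supremum of `b - a` over pairs
`a = t + jδ`, `b = t + kδ` with `j, k ∈ ℤ`, `|j|, |k| ≤ ⌈M/δ⌉`, `a ≤ t ≤ b` and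
`[a,b] ⊆ S` (value `0` if no such pair exists). -/
noncomputable def connIntervalDisc (δ M t : ℝ) (S : Set ℝ) : ℝ≥0∞ :=
  ⨆ (j : ℤ) (k : ℤ) (_ : |j| ≤ ⌈M / δ⌉) (_ : |k| ≤ ⌈M / δ⌉)
    (_ : t + (j : ℝ) * δ ≤ t) (_ : t ≤ t + (k : ℝ) * δ)
    (_ : Set.Icc (t + (j : ℝ) * δ) (t + (k : ℝ) * δ) ⊆ S),
    ENNReal.ofReal ((t + (k : ℝ) * δ) - (t + (j : ℝ) * δ))

/-! Part (i) holds because every grid interval is an interval. For (ii), walk from `t` in steps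
of `δ` to the left and to the right, as far as `[a, b]` allows but at most `⌈M/δ⌉` steps, which
already covers a length `M`. Each side then falls short of `min (length of its half) M` by less
than `δ`, and `min (·) M` is subadditive on the two halves `[a, t]`, `[t, b]`. The bound in terms
of `I(t,S)` follows by taking the supremum over all `[a, b]`. -/

section

variable {S : Set ℝ} {t δ M : ℝ}

lemma ofReal_le_connInterval {a b : ℝ} (hab : a ≤ b) (ht : t ∈ Set.Icc a b)
    (hS : Set.Icc a b ⊆ S) : ENNReal.ofReal (b - a) ≤ connInterval t S :=
  le_iSup₂_of_le a b <| le_iSup₂_of_le hab ht <| le_iSup_of_le hS le_rfl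

lemma ofReal_le_connIntervalDisc {j k : ℤ} (hj : |j| ≤ ⌈M / δ⌉) (hk : |k| ≤ ⌈M / δ⌉)
    (hjt : t + j * δ ≤ t) (htk : t ≤ t + k * δ) (hS : Set.Icc (t + j * δ) (t + k * δ) ⊆ S) :
    ENNReal.ofReal ((t + k * δ) - (t + j * δ)) ≤ connIntervalDisc δ M t S :=
  le_iSup₂_of_le j k <| le_iSup₂_of_le hj hk <| le_iSup₂_of_le hjt htk <| le_iSup_of_le hS le_rfl

lemma connIntervalDisc_le_connInterval : connIntervalDisc δ M t S ≤ connInterval t S :=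
  iSup₂_le fun _ _ => iSup₂_le fun _ _ => iSup₂_le fun hjt htk => iSup_le fun hS =>
    ofReal_le_connInterval (hjt.trans htk) ⟨hjt, htk⟩ hS

lemma exists_int_mul_le_and_min_sub_le (hδ : 0 < δ) (hM : 0 ≤ M) {x : ℝ} (hx : 0 ≤ x) :
    ∃ m : ℤ, 0 ≤ m ∧ m ≤ ⌈M / δ⌉ ∧ (m : ℝ) * δ ≤ x ∧ min x M - δ ≤ m * δ := by
  refine ⟨min ⌊x / δ⌋ ⌈M / δ⌉, le_min (Int.floor_nonneg.2 (div_nonneg hx hδ.le))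
    (Int.ceil_nonneg (div_nonneg hM hδ.le)), min_le_right _ _, ?_, ?_⟩
  · calc ((min ⌊x / δ⌋ ⌈M / δ⌉ : ℤ) : ℝ) * δ ≤ ⌊x / δ⌋ * δ := by
          gcongr; exact_mod_cast min_le_left _ _
      _ ≤ x / δ * δ := by gcongr; exact Int.floor_le _
      _ = x := div_mul_cancel₀ x hδ.ne'
  · have hfloor : x - δ ≤ ⌊x / δ⌋ * δ := by
      have := Int.lt_floor_add_one (x / δ)
      rw [div_lt_iff₀ hδ] at this
      linarith
    have hceil : M ≤ ⌈M / δ⌉ * δ := (div_le_iff₀ hδ).1 (Int.le_ceil _)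
    rw [Int.cast_min, min_mul_of_nonneg _ _ hδ.le]
    exact le_min (by linarith [min_le_left x M]) (by linarith [min_le_right x M])

lemma min_add_le_min_add_min {x y M : ℝ} (hx : 0 ≤ x) (hy : 0 ≤ y) (hM : 0 ≤ M) :
    min (x + y) M ≤ min x M + min y M := by
  simp only [min_def]; split_ifs <;> linarith

lemma ofReal_min_sub_le_connIntervalDisc (hδ : 0 < δ) {a b : ℝ} (hat : a ≤ t) (htb : t ≤ b)
    (hS : Set.Icc a b ⊆ S) :
    ENNReal.ofReal (min (b - a) M - 2 * δ) ≤ connIntervalDisc δ M t S := by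
  rcases le_or_gt (min (b - a) M - 2 * δ) 0 with hle | hpos
  · rw [ENNReal.ofReal_of_nonpos hle]; exact zero_le
  have hM : 0 ≤ M := by linarith [min_le_right (b - a) M]
  obtain ⟨m, hm0, hmN, hma, hm⟩ := exists_int_mul_le_and_min_sub_le hδ hM (sub_nonneg.2 hat)
  obtain ⟨n, hn0, hnN, hnb, hn⟩ := exists_int_mul_le_and_min_sub_le hδ hM (sub_nonneg.2 htb)
  have hmin : min (b - a) M ≤ min (t - a) M + min (b - t) M := by
    simpa using min_add_le_min_add_min (M := M) (sub_nonneg.2 hat) (sub_nonneg.2 htb) hM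
  have hm' : (0 : ℝ) ≤ m * δ := mul_nonneg (by exact_mod_cast hm0) hδ.le
  have hn' : (0 : ℝ) ≤ n * δ := mul_nonneg (by exact_mod_cast hn0) hδ.le
  refine le_trans (ENNReal.ofReal_le_ofReal ?_) (ofReal_le_connIntervalDisc (j := -m) (k := n)
    (by rwa [abs_neg, abs_of_nonneg hm0]) (by rwa [abs_of_nonneg hn0])
    (by push_cast; linarith) (by linarith)
    ((Set.Icc_subset_Icc (by push_cast; linarith) (by linarith)).trans hS))
  push_cast
  linarith

lemma min_connInterval_sub_le {X : ℝ≥0∞} {c : ℝ}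
    (h : ∀ a b : ℝ, a ≤ t → t ≤ b → Set.Icc a b ⊆ S → ENNReal.ofReal (min (b - a) M - c) ≤ X) :
    min (connInterval t S) (ENNReal.ofReal M) - ENNReal.ofReal c ≤ X := by
  rw [tsub_le_iff_right, connInterval]
  simp only [iSup_inf_eq]
  refine iSup₂_le fun a b => iSup₂_le fun _ ht => iSup_le fun hS => ?_
  calc min (ENNReal.ofReal (b - a)) (ENNReal.ofReal M)
      = ENNReal.ofReal (min (b - a) M - c + c) := by rw [sub_add_cancel, ENNReal.ofReal_min]
    _ ≤ ENNReal.ofReal (min (b - a) M - c) + ENNReal.ofReal c := ENNReal.ofReal_add_le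
    _ ≤ X + ENNReal.ofReal c := by gcongr; exact h a b ht.1 ht.2 hS

end

theorem discretized_interval_length_bounds_general
    (S : Set ℝ) (t δ M : ℝ) (hδ : 0 < δ) :
    connIntervalDisc δ M t S ≤ connInterval t S ∧
    (∀ a b : ℝ, a ≤ t → t ≤ b → Set.Icc a b ⊆ S →
      ENNReal.ofReal (min (b - a) M - 2 * δ) ≤ connIntervalDisc δ M t S) ∧
    (t ∈ S →
      min (connInterval t S) (ENNReal.ofReal M) - ENNReal.ofReal (2 * δ)
        ≤ connIntervalDisc δ M t S) :=
  ⟨connIntervalDisc_le_connInterval,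
    fun _ _ hat htb hS => ofReal_min_sub_le_connIntervalDisc hδ hat htb hS,
    fun _ => min_connInterval_sub_le fun _ _ hat htb hS =>
      ofReal_min_sub_le_connIntervalDisc hδ hat htb hS⟩

/-- (i) `I_{δ,M}(t,S) ≤ I(t,S)`; (ii) if `a ≤ t ≤ b` and `[a,b] ⊆ S` then
`I_{δ,M}(t,S) ≥ min(b - a, M) - 2δ`; in particular, if `t ∈ S` then
`I_{δ,M}(t,S) ≥ min(I(t,S), M) - 2δ`. -/
theorem discretized_interval_length_bounds
    (S : Set ℝ) (t δ M : ℝ) (hδ : 0 < δ) (hM : 0 < M) :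
    connIntervalDisc δ M t S ≤ connInterval t S ∧
    (∀ a b : ℝ, a ≤ t → t ≤ b → Set.Icc a b ⊆ S →
      ENNReal.ofReal (min (b - a) M - 2 * δ) ≤ connIntervalDisc δ M t S) ∧
    (t ∈ S →
      min (connInterval t S) (ENNReal.ofReal M) - ENNReal.ofReal (2 * δ)
        ≤ connIntervalDisc δ M t S) :=
  discretized_interval_length_bounds_general S t δ M hδ
end
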